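/- arXiv:1910.02905 — 3 statements merged into one kernel-verified Lean document; each statement's English description precedes it below -/
import Mathlib

section
/- With Free as above, for any V-graph X and any (V,⊗)-category Y, a function f : X → Y is a morphism of V-graphs (X(a,b) ≤ Y(fa,fb)) if and only if it is a morphism from Free X to Y ((Free X)(a,b) ≤ Y(fa,fb)); in particular Free is left adjoint to the forgetful functor from (V,⊗)-categories to V-graphs. -/
/-- The `⊗`-value of a path `a, x_1, …, x_n, b` in a `V`-graph. -/
def pathVal {V X : Type*} (op : V → V → V) (d : X → X → V) : X → List X → X → V
  | a, [], b => d a b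
  | a, x :: xs, b => op (d a x) (pathVal op d x xs b)

/-- `(Free X)(a,b)`: the supremum over all finite paths from `a` to `b` of the
`⊗`-product of the edge values. -/
noncomputable def freeDist {V X : Type*} [CompleteLattice V] (op : V → V → V)
    (d : X → X → V) (a b : X) : V :=
  ⨆ l : List X, pathVal op d a l b

lemma op_mono_left {V : Type*} [CompleteLattice V] (op : V → V → V)
    (hsup_right : ∀ (x : V) (S : Set V), op (sSup S) x = ⨆ y ∈ S, op y x)
    {x x' : V} (h : x ≤ x') (y : V) : op x y ≤ op x' y := by
  have hs : sSup ({x, x'} : Set V) = x' := by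
    apply le_antisymm (sSup_le ?_) (le_sSup (by simp))
    rintro z (rfl | rfl) <;> simp [h]
  calc op x y ≤ ⨆ z ∈ ({x, x'} : Set V), op z y := by
        apply le_biSup (f := fun z => op z y); simp
    _ = op x' y := by rw [← hsup_right, hs]

lemma op_mono_right {V : Type*} [CompleteLattice V] (op : V → V → V)
    (hsup_left : ∀ (x : V) (S : Set V), op x (sSup S) = ⨆ y ∈ S, op x y)
    {y y' : V} (h : y ≤ y') (x : V) : op x y ≤ op x y' := by
  have hs : sSup ({y, y'} : Set V) = y' := by
    apply le_antisymm (sSup_le ?_) (le_sSup (by simp))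
    rintro z (rfl | rfl) <;> simp [h]
  calc op x y ≤ ⨆ z ∈ ({y, y'} : Set V), op x z := by
        apply le_biSup (f := fun z => op x z); simp
    _ = op x y' := by rw [← hsup_left, hs]

/-- `Free` is left adjoint to the forgetful functor: for a `V`-graph `X` and a
`(V,⊗)`-category `Y`, a function `f : X → Y` is a morphism of `V`-graphs iff it
is a morphism of `V`-graphs from `Free X` to `Y`. -/
theorem stmt9 {V X Y : Type*} [CompleteLattice V] (op : V → V → V)
    (hassoc : ∀ x y z : V, op (op x y) z = op x (op y z))
    (htop_left : ∀ x : V, op ⊤ x = x) (htop_right : ∀ x : V, op x ⊤ = x)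
    (hsup_left : ∀ (x : V) (S : Set V), op x (sSup S) = ⨆ y ∈ S, op x y)
    (hsup_right : ∀ (x : V) (S : Set V), op (sSup S) x = ⨆ y ∈ S, op y x)
    (d : X → X → V) (hrefl : ∀ a, d a a = ⊤)
    (dY : Y → Y → V) (hYrefl : ∀ a, dY a a = ⊤)
    (hYtri : ∀ a b c : Y, op (dY a b) (dY b c) ≤ dY a c)
    (f : X → Y) :
    (∀ a b : X, d a b ≤ dY (f a) (f b)) ↔
    (∀ a b : X, freeDist op d a b ≤ dY (f a) (f b)) := by
  constructor
  · intro h a b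
    apply iSup_le
    intro l
    induction l generalizing a with
    | nil => exact h a b
    | cons x xs ih =>
        calc pathVal op d a (x :: xs) b = op (d a x) (pathVal op d x xs b) := rfl
          _ ≤ op (dY (f a) (f x)) (pathVal op d x xs b) :=
              op_mono_left op hsup_right (h a x) _
          _ ≤ op (dY (f a) (f x)) (dY (f x) (f b)) :=
              op_mono_right op hsup_left (ih x) _
          _ ≤ dY (f a) (f b) := hYtri _ _ _
  · intro h a b
    refine le_trans ?_ (h a b)
    exact le_iSup (fun l : List X => pathVal op d a l b) []
end

section
/- Let (V,⊗) be an affine quantale and let Δ^n_⊗(r_1,…,r_n) be the (V,⊗)-category with objects x_0,…,x_n and hom-values Δ(x_i,x_j) = ⨂_{k=i+1}^{j} r_k for i ≤ j (empty product = ⊤ when i = j) and ⊥ for i > j. Then a V-graph X is a (V,⊗)-category if and only if for every n and every (r_1,…,r_n) ∈ V^n, every V-graph morphism from the 'spine' Γ^n(r_1,…,r_n) (same vertices, hom-values r_j on consecutive pairs (x_{j-1},x_j), ⊤ on diagonal, ⊥ elsewhere) into X extends uniquely to a V-graph morphism from Δ^n_⊗(r_1,…,r_n) into X. -/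
/-- The `⊗`-product of a list of elements of `V`, with the empty product `⊤`. -/
def opProd {V : Type*} [CompleteLattice V] (op : V → V → V) : List V → V
  | [] => ⊤
  | x :: xs => op x (opProd op xs)

/-- The spine `Γ^n(r_1,…,r_n)`: hom-value `r_j` on consecutive pairs
`(x_{j-1}, x_j)`, `⊤` on the diagonal and `⊥` elsewhere. -/
def gammaDist {V : Type*} [CompleteLattice V] {n : ℕ} (r : Fin n → V)
    (i j : Fin (n + 1)) : V :=
  if i = j then ⊤
  else if h : i.val + 1 = j.val then r ⟨i.val, by have := j.isLt; omega⟩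
  else ⊥

/-- The simplex `Δ^n_⊗(r_1,…,r_n)`: hom-value `⨂_{k=i+1}^{j} r_k` for `i ≤ j`
(with the empty product `⊤` on the diagonal) and `⊥` for `i > j`. -/
def deltaDist {V : Type*} [CompleteLattice V] {n : ℕ} (op : V → V → V) (r : Fin n → V)
    (i j : Fin (n + 1)) : V :=
  if i ≤ j then
    opProd op ((List.range' i.val (j.val - i.val)).map
      (fun k => if h : k < n then r ⟨k, h⟩ else ⊤))
  else ⊥

theorem opProd_cons {V : Type*} [CompleteLattice V] (op : V → V → V) (x : V) (xs : List V) :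
    opProd op (x :: xs) = op x (opProd op xs) := rfl

/-- A `V`-graph is a `(V,⊗)`-category iff every morphism from a spine
`Γ^n(r_1,…,r_n)` extends uniquely along `Γ^n(r_1,…,r_n) → Δ^n_⊗(r_1,…,r_n)`. -/
theorem stmt12 {V X : Type*} [CompleteLattice V] (op : V → V → V)
    (hassoc : ∀ x y z : V, op (op x y) z = op x (op y z))
    (htop_left : ∀ x : V, op ⊤ x = x) (htop_right : ∀ x : V, op x ⊤ = x)
    (hsup_left : ∀ (x : V) (S : Set V), op x (sSup S) = ⨆ y ∈ S, op x y)
    (hsup_right : ∀ (x : V) (S : Set V), op (sSup S) x = ⨆ y ∈ S, op y x)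
    (d : X → X → V) (hrefl : ∀ a, d a a = ⊤) :
    (∀ a b c : X, op (d a b) (d b c) ≤ d a c) ↔
    (∀ (n : ℕ) (r : Fin n → V) (f : Fin (n + 1) → X),
      (∀ i j, gammaDist r i j ≤ d (f i) (f j)) →
      ∃! g : Fin (n + 1) → X,
        (∀ i j, deltaDist op r i j ≤ d (g i) (g j)) ∧ g = f) := by
  have mono_right : ∀ x a b : V, a ≤ b → op x a ≤ op x b := by
    intro x a b hab
    have h1 : op x b = op x (sSup {a, b}) := by
      rw [sSup_pair, sup_eq_right.mpr hab]
    rw [h1, hsup_left]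
    exact le_biSup (fun y => op x y) (Set.mem_insert a {b})
  have mono_left : ∀ x a b : V, a ≤ b → op a x ≤ op b x := by
    intro x a b hab
    have h1 : op b x = op (sSup {a, b}) x := by
      rw [sSup_pair, sup_eq_right.mpr hab]
    rw [h1, hsup_right]
    exact le_biSup (fun y => op y x) (Set.mem_insert a {b})
  constructor
  · intro htrans n r f hf
    refine ⟨f, ⟨?_, rfl⟩, fun g hg => hg.2⟩
    have key : ∀ m : ℕ, ∀ i j : Fin (n + 1), i.val + m = j.val →
        opProd op ((List.range' i.val m).map
          (fun k => if h : k < n then r ⟨k, h⟩ else ⊤)) ≤ d (f i) (f j) := by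
      intro m
      induction m with
      | zero =>
        intro i j hij
        have : i = j := Fin.ext (by omega)
        subst this
        simp [opProd, hrefl]
      | succ m ih =>
        intro i j hij
        have hi : i.val < n := by have := j.isLt; omega
        have hi1 : i.val + 1 < n + 1 := by omega
        set i' : Fin (n + 1) := ⟨i.val + 1, hi1⟩ with hi'
        rw [List.range'_succ, List.map_cons]
        rw [opProd_cons]
        have h1 : (if h : i.val < n then r ⟨i.val, h⟩ else ⊤) ≤ d (f i) (f i') := by
          have := hf i i'
          rw [gammaDist] at this
          have hne : i ≠ i' := by
            intro h; apply absurd (congrArg Fin.val h); simp [hi']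
          rw [if_neg hne, dif_pos (by simp [hi'])] at this
          simpa [hi] using this
        have h2 : opProd op ((List.range' (i.val + 1) m).map
            (fun k => if h : k < n then r ⟨k, h⟩ else ⊤)) ≤ d (f i') (f j) := by
          exact ih i' j (by simp [hi']; omega)
        calc op (if h : i.val < n then r ⟨i.val, h⟩ else ⊤)
              (opProd op ((List.range' (i.val + 1) m).map
                (fun k => if h : k < n then r ⟨k, h⟩ else ⊤)))
            ≤ op (d (f i) (f i')) (d (f i') (f j)) :=
              le_trans (mono_left _ _ _ h1) (mono_right _ _ _ h2)
          _ ≤ d (f i) (f j) := htrans _ _ _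
    intro i j
    rw [deltaDist]
    by_cases hij : i ≤ j
    · rw [if_pos hij]
      exact key (j.val - i.val) i j (by omega)
    · rw [if_neg hij]; exact bot_le
  · intro hext a b c
    set r : Fin 2 → V := ![d a b, d b c] with hr
    set f : Fin 3 → X := ![a, b, c] with hf
    have hspine : ∀ i j, gammaDist r i j ≤ d (f i) (f j) := by
      intro i j
      fin_cases i <;> fin_cases j <;>
        simp [gammaDist, hrefl, hf, hr, Fin.ext_iff]
    obtain ⟨g, ⟨hg, hgf⟩, -⟩ := hext 2 r f hspine
    subst hgf
    have := hg 0 2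
    rw [deltaDist] at this
    simp only [if_pos (by decide : (0 : Fin 3) ≤ 2)] at this
    have hval : opProd op ((List.range' (0:ℕ) 2).map
        (fun k => if h : k < 2 then r ⟨k, h⟩ else ⊤)) = op (d a b) (d b c) := by
      show op _ (op _ (⊤ : V)) = _
      rw [htop_right]
      rfl
    rw [← hval]
    exact this
end

section
/- Let X be an ℓ^1 metric space (d : X × X → [0,∞], d(x,x)=0, d(a,c) ≤ d(a,b) + d(b,c)). Then for r ∈ [0,∞] and n ∈ ℕ, the set N_+(X)(r)_n of (n+1)-tuples (x_0,…,x_n) for which there exist r_1,…,r_n with ∑ r_i ≤ r and d(x_i,x_j) ≤ ∑_{i<k≤j} r_k for all i ≤ j, is exactly the set of tuples satisfying ∑_{i=1}^n d(x_{i-1}, x_i) ≤ r. -/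
open ENNReal

/-- For an `ℓ^1` metric space, the `n`-simplices of the nerve `N_+(X)(r)` are
exactly the tuples whose consecutive distances sum to at most `r`. -/
theorem stmt15 {X : Type*} (d : X → X → ℝ≥0∞) (hrefl : ∀ x, d x x = 0)
    (htri : ∀ a b c, d a c ≤ d a b + d b c)
    (r : ℝ≥0∞) (n : ℕ) (x : Fin (n + 1) → X) :
    (∃ rr : Fin n → ℝ≥0∞, (∑ i, rr i) ≤ r ∧
        ∀ i j : Fin (n + 1), i ≤ j →
          d (x i) (x j) ≤ ∑ k ∈ Finset.Ico i.val j.val, (if h : k < n then rr ⟨k, h⟩ else 0)) ↔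
    (∑ i : Fin n, d (x i.castSucc) (x i.succ)) ≤ r := by
  constructor
  · rintro ⟨rr, hsum, hd⟩
    calc (∑ i : Fin n, d (x i.castSucc) (x i.succ))
        ≤ ∑ i : Fin n, rr i := by
          refine Finset.sum_le_sum fun i _ => ?_
          have := hd i.castSucc i.succ (by simp [Fin.le_def])
          simpa [Fin.val_succ, Finset.sum_Ico_eq_sum_range, i.isLt] using this
      _ ≤ r := hsum
  · intro hsum
    refine ⟨fun i => d (x i.castSucc) (x i.succ), hsum, ?_⟩
    have key : ∀ j i : ℕ, (hi : i ≤ j) → (hj : j ≤ n) →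
        d (x ⟨i, by omega⟩) (x ⟨j, by omega⟩) ≤ ∑ k ∈ Finset.Ico i j,
          (if h : k < n then d (x (Fin.castSucc ⟨k, h⟩)) (x (Fin.succ ⟨k, h⟩)) else 0) := by
      intro j
      induction j with
      | zero => intro i hi hj; interval_cases i; simp [hrefl]
      | succ m ih =>
        intro i hi hj
        rcases Nat.lt_or_ge i (m+1) with h | h
        · have him : i ≤ m := by omega
          have hstep : d (x ⟨i, by omega⟩) (x ⟨m+1, by omega⟩) ≤
              d (x ⟨i, by omega⟩) (x ⟨m, by omega⟩) + d (x ⟨m, by omega⟩) (x ⟨m+1, by omega⟩) :=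
            htri _ _ _
          rw [Finset.sum_Ico_succ_top him]
          refine hstep.trans (add_le_add (ih i him (by omega)) ?_)
          have hm : m < n := by omega
          simp only [hm, dif_pos]
          exact le_of_eq (by congr 1)
        · have : i = m + 1 := by omega
          subst this
          simp [hrefl]
    intro i j hij
    have := key j.val i.val hij (by omega)
    convert this using 3
end
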